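/- arXiv:2303.17277 — 3 statements merged into one kernel-verified Lean document; each statement's English description precedes it below -/
import Mathlib

section
/- Let Ω be a positive definite real d×d matrix and C a real a×d matrix such that C·Ω·Cᵀ is invertible, and define M = I_d − Ω·Cᵀ·(C·Ω·Cᵀ)⁻¹·C. Then (i) C·M = 0, so M·x̂ satisfies the linear constraints for every x̂ ∈ ℝ^d; (ii) M·x = x for every x ∈ ℝ^d with C·x = 0; and (iii) M·M = M, i.e., M is a projection onto the coherent subspace {x : C·x = 0}. -/
open Matrix

/-- Properties of the reconciliation projection matrix
`M = I − Ω·Cᵀ·(C·Ω·Cᵀ)⁻¹·C`: (i) `C·M = 0`, so `M·x̂` is coherent for any base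
forecast `x̂`; (ii) `M` fixes every coherent vector; (iii) `M` is idempotent,
i.e. a projection onto the coherent subspace `{x : C·x = 0}`. -/
theorem reconciliation_projection_properties {d a : ℕ}
    (Ω : Matrix (Fin d) (Fin d) ℝ) (hΩ : Ω.PosDef)
    (C : Matrix (Fin a) (Fin d) ℝ) (hinv : IsUnit (C * Ω * Cᵀ)) :
    let M : Matrix (Fin d) (Fin d) ℝ := 1 - Ω * Cᵀ * (C * Ω * Cᵀ)⁻¹ * C
    C * M = 0 ∧
    (∀ x : Fin d → ℝ, C.mulVec x = 0 → M.mulVec x = x) ∧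
    M * M = M := by
  intro M
  have hdet : IsUnit (C * Ω * Cᵀ).det := (isUnit_iff_isUnit_det _).mp hinv
  have key : (C * Ω * Cᵀ) * (C * Ω * Cᵀ)⁻¹ = 1 := mul_nonsing_inv _ hdet
  have hCM : C * M = 0 := by
    have : C * (Ω * Cᵀ * (C * Ω * Cᵀ)⁻¹ * C) = C := by
      calc C * (Ω * Cᵀ * (C * Ω * Cᵀ)⁻¹ * C)
          = ((C * Ω * Cᵀ) * (C * Ω * Cᵀ)⁻¹) * C := by
            simp only [Matrix.mul_assoc]
        _ = C := by rw [key, Matrix.one_mul]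
    simp [M, Matrix.mul_sub, this]
  refine ⟨hCM, ?_, ?_⟩
  · intro x hx
    have : (Ω * Cᵀ * (C * Ω * Cᵀ)⁻¹ * C).mulVec x = 0 := by
      rw [← Matrix.mulVec_mulVec, hx, Matrix.mulVec_zero]
    simp [M, Matrix.sub_mulVec, this]
  · have : M * M = M - (Ω * Cᵀ * (C * Ω * Cᵀ)⁻¹) * (C * M) := by
      simp only [M, Matrix.sub_mul, Matrix.mul_sub, Matrix.one_mul, Matrix.mul_one,
        Matrix.mul_assoc]
    rw [this, hCM, Matrix.mul_zero, sub_zero]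
end

section
/- Let Ω be a positive definite real d×d matrix, C a real a×d matrix with linearly independent rows, and S a real d×b matrix with b ↦ S·b injective, such that {x ∈ ℝ^d : C·x = 0} = {S·b : b ∈ ℝ^b}. Then I_d − Ω·Cᵀ·(C·Ω·Cᵀ)⁻¹·C = S·(Sᵀ·Ω⁻¹·S)⁻¹·Sᵀ·Ω⁻¹; i.e., the zero-constrained (projection) representation of optimal reconciliation and the structural representation M = S·G with G = (Sᵀ·Ω⁻¹·S)⁻¹·Sᵀ·Ω⁻¹ coincide. -/
/-!
Both sides are oblique projections onto `range S = ker C`. The structural matrix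
`P = S (Sᵀ Ω⁻¹ S)⁻¹ Sᵀ Ω⁻¹` fixes `range S` and kills `Ω Cᵀ` (because `C S = 0`), while the
columns of `M = I − Ω Cᵀ (C Ω Cᵀ)⁻¹ C` lie in `ker C = range S`. Hence `P M = P` and `P M = M`.
-/

open Matrix

namespace Matrix

section CommRing

variable {k l m n R : Type*} [Fintype m] [Fintype n] [CommRing R]

theorem mul_eq_zero_of_range_subset_ker {C : Matrix l m R} {S : Matrix m n R}
    (h : {x | ∃ y, x = S *ᵥ y} ⊆ {x | C *ᵥ x = 0}) : C * S = 0 :=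
  ext_iff_mulVec.2 fun y => by rw [← mulVec_mulVec, zero_mulVec]; exact h ⟨y, rfl⟩

theorem mul_eq_self_of_ker_subset_range {C : Matrix l m R} {S : Matrix m n R}
    {P : Matrix m m R} {M : Matrix m k R} [Fintype k]
    (h : {x | C *ᵥ x = 0} ⊆ {x | ∃ y, x = S *ᵥ y}) (hPS : P * S = S) (hCM : C * M = 0) :
    P * M = M := by
  refine ext_iff_mulVec.2 fun v => ?_
  obtain ⟨y, hy⟩ : ∃ y, M *ᵥ v = S *ᵥ y := h (by simp [mulVec_mulVec, hCM])
  rw [← mulVec_mulVec, hy, mulVec_mulVec, hPS]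

variable [DecidableEq m]

theorem mul_nonsing_inv_mul_mul_self (X : Matrix n m R) (Y : Matrix m n R)
    (h : IsUnit (Y * X).det) : X * (Y * X)⁻¹ * Y * X = X := by
  simp only [Matrix.mul_assoc, nonsing_inv_mul _ h, Matrix.mul_one]

theorem mul_mul_nonsing_inv_mul_self (X : Matrix n m R) (Y : Matrix m n R)
    (h : IsUnit (Y * X).det) : Y * X * (Y * X)⁻¹ * Y = Y := by
  rw [mul_nonsing_inv _ h, Matrix.one_mul]

end CommRing

theorem PosDef.transpose_mul_mul_same {m n K : Type*} [Fintype m] [Fintype n] [Field K]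
    [PartialOrder K] [StarRing K] [TrivialStar K] {A : Matrix n n K} (hA : A.PosDef)
    {B : Matrix n m K} (hB : Function.Injective B.mulVec) : (Bᵀ * A * B).PosDef := by
  simpa only [conjTranspose_eq_transpose_of_trivial] using hA.conjTranspose_mul_mul_same hB

theorem PosDef.isUnit_det {n K : Type*} [Fintype n] [DecidableEq n] [Field K] [PartialOrder K]
    [StarRing K] {A : Matrix n n K} (hA : A.PosDef) : IsUnit A.det :=
  (isUnit_iff_isUnit_det A).1 hA.isUnit

end Matrix

/-- Equivalence of the zero-constrained (projection) and structural representations of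
optimal reconciliation: if the kernel of `C` equals the column space of `S`, then
`I − Ω·Cᵀ·(C·Ω·Cᵀ)⁻¹·C = S·(Sᵀ·Ω⁻¹·S)⁻¹·Sᵀ·Ω⁻¹`. -/
theorem projection_eq_structural {d a b : ℕ}
    (Ω : Matrix (Fin d) (Fin d) ℝ) (hΩ : Ω.PosDef)
    (C : Matrix (Fin a) (Fin d) ℝ) (hC : Function.Injective Cᵀ.mulVec)
    (S : Matrix (Fin d) (Fin b) ℝ) (hS : Function.Injective S.mulVec)
    (hker : {x : Fin d → ℝ | C.mulVec x = 0} = {x : Fin d → ℝ | ∃ b₀ : Fin b → ℝ, x = S.mulVec b₀}) :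
    (1 : Matrix (Fin d) (Fin d) ℝ) - Ω * Cᵀ * (C * Ω * Cᵀ)⁻¹ * C
      = S * (Sᵀ * Ω⁻¹ * S)⁻¹ * Sᵀ * Ω⁻¹ := by
  have hCS : C * S = 0 := mul_eq_zero_of_range_subset_ker hker.ge
  have hCΩC : IsUnit (C * (Ω * Cᵀ)).det := by
    simpa only [transpose_transpose, Matrix.mul_assoc] using
      (hΩ.transpose_mul_mul_same hC).isUnit_det
  have hSΩS : IsUnit (Sᵀ * Ω⁻¹ * S).det := (hΩ.inv.transpose_mul_mul_same hS).isUnit_det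
  set M := (1 : Matrix (Fin d) (Fin d) ℝ) - Ω * Cᵀ * (C * Ω * Cᵀ)⁻¹ * C
  set P := S * (Sᵀ * Ω⁻¹ * S)⁻¹ * Sᵀ * Ω⁻¹
  have hPS : P * S = S := by
    simpa only [P, Matrix.mul_assoc] using mul_nonsing_inv_mul_mul_self S (Sᵀ * Ω⁻¹) hSΩS
  have hPΩC : P * (Ω * Cᵀ) = 0 := by
    simp only [P, Matrix.mul_assoc, nonsing_inv_mul_cancel_left _ _ hΩ.isUnit_det,
      ← transpose_mul, hCS, transpose_zero, Matrix.mul_zero]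
  have hCM : C * M = 0 := by
    have h : C * (Ω * Cᵀ * (C * Ω * Cᵀ)⁻¹ * C) = C * (Ω * Cᵀ) * (C * (Ω * Cᵀ))⁻¹ * C := by
      simp only [Matrix.mul_assoc]
    rw [Matrix.mul_sub, Matrix.mul_one, h, mul_mul_nonsing_inv_mul_self _ _ hCΩC, sub_self]
  have hPM : P * M = P := by
    simp only [M, Matrix.mul_sub, Matrix.mul_one, ← Matrix.mul_assoc, hPΩC, Matrix.zero_mul,
      sub_zero]
  rw [← hPM, mul_eq_self_of_ker_subset_range hker.le hPS hCM]
end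

section
/- Let W be a positive definite real d×d matrix and S a real d×b matrix with b ↦ S·b injective, and set G* = (Sᵀ·W⁻¹·S)⁻¹·Sᵀ·W⁻¹. Then for every real b×d matrix G satisfying the unbiasedness condition G·S = I_b, the matrix S·G·W·Gᵀ·Sᵀ − S·G*·W·G*ᵀ·Sᵀ is positive semidefinite; i.e., G* yields the minimum variance (in the Loewner order) linear unbiased reconciled forecasts when the base forecast error covariance equals W. -/
open Matrix

/-!
Let `M = Sᵀ W⁻¹ S`, invertible because `S` is injective and `W` positive definite. Every unbiased
`G` satisfies `G W G*ᵀ = G W W⁻¹ S M⁻¹ = G S M⁻¹ = M⁻¹`; as `G*` is itself unbiased, the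
difference `G - G*` is `W`-orthogonal to `G*`. Hence, by Pythagoras for the bilinear form of `W`,
`G W Gᵀ - G* W G*ᵀ = (G - G*) W (G - G*)ᵀ`, and conjugating by `S` preserves positive
semidefiniteness.
-/

namespace Matrix

variable {m n R : Type*} [Fintype m] [CommRing R]

lemma mul_mul_transpose_sub_mul_mul_transpose {l : Type*} {W : Matrix m m R} (hW : Wᵀ = W)
    {G H : Matrix l m R} (hGH : (G - H) * W * Hᵀ = 0) :
    G * W * Gᵀ - H * W * Hᵀ = (G - H) * W * (G - H)ᵀ := by
  have hHG : H * W * (G - H)ᵀ = 0 := by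
    simpa only [transpose_mul, transpose_transpose, hW, transpose_zero, Matrix.mul_assoc]
      using congrArg transpose hGH
  obtain ⟨D, rfl⟩ : ∃ D, G = D + H := ⟨G - H, (sub_add_cancel G H).symm⟩
  simp only [add_sub_cancel_right] at hGH hHG ⊢
  simp only [transpose_add, Matrix.add_mul, Matrix.mul_add, hGH, hHG]
  abel

variable [Fintype n] [DecidableEq m] [DecidableEq n]

noncomputable def minT (W : Matrix m m R) (S : Matrix m n R) : Matrix n m R :=
  (Sᵀ * W⁻¹ * S)⁻¹ * Sᵀ * W⁻¹

lemma minT_mul_self {W : Matrix m m R} {S : Matrix m n R} (hM : IsUnit (Sᵀ * W⁻¹ * S).det) :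
    minT W S * S = 1 := by
  rw [minT, Matrix.mul_assoc, Matrix.mul_assoc, ← Matrix.mul_assoc Sᵀ, nonsing_inv_mul _ hM]

lemma transpose_minT {W : Matrix m m R} (hW : Wᵀ = W) (S : Matrix m n R) :
    (minT W S)ᵀ = W⁻¹ * S * (Sᵀ * W⁻¹ * S)⁻¹ := by
  have hWinv : W⁻¹ᵀ = W⁻¹ := by rw [transpose_nonsing_inv, hW]
  have hM : (Sᵀ * W⁻¹ * S)ᵀ = Sᵀ * W⁻¹ * S := by
    rw [transpose_mul, transpose_mul, transpose_transpose, hWinv, Matrix.mul_assoc]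
  rw [minT, transpose_mul, transpose_mul, transpose_transpose, hWinv, transpose_nonsing_inv, hM,
    ← Matrix.mul_assoc W⁻¹]

lemma mul_mul_transpose_minT {W : Matrix m m R} (hWdet : IsUnit W.det) (hW : Wᵀ = W)
    {S : Matrix m n R} {G : Matrix n m R} (hG : G * S = 1) :
    G * W * (minT W S)ᵀ = (Sᵀ * W⁻¹ * S)⁻¹ := by
  rw [transpose_minT hW, Matrix.mul_assoc G, Matrix.mul_assoc W⁻¹,
    mul_nonsing_inv_cancel_left _ _ hWdet, ← Matrix.mul_assoc, hG, Matrix.one_mul]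

end Matrix

/-- **MinT optimality.** With base forecast error covariance `W` (positive definite) and
full-column-rank structural matrix `S`, the choice `G* = (Sᵀ·W⁻¹·S)⁻¹·Sᵀ·W⁻¹` minimizes,
in the Loewner order, the reconciled error covariance `S·G·W·Gᵀ·Sᵀ` among all `G`
satisfying the unbiasedness condition `G·S = I`. -/
theorem minT_optimality {d b : ℕ}
    (W : Matrix (Fin d) (Fin d) ℝ) (hW : W.PosDef)
    (S : Matrix (Fin d) (Fin b) ℝ) (hS : Function.Injective S.mulVec) :
    let Gstar : Matrix (Fin b) (Fin d) ℝ := (Sᵀ * W⁻¹ * S)⁻¹ * Sᵀ * W⁻¹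
    ∀ G : Matrix (Fin b) (Fin d) ℝ, G * S = 1 →
      (S * G * W * Gᵀ * Sᵀ - S * Gstar * W * Gstarᵀ * Sᵀ).PosSemidef := by
  intro Gstar G hG
  change (S * G * W * Gᵀ * Sᵀ - S * minT W S * W * (minT W S)ᵀ * Sᵀ).PosSemidef
  have hWsymm : Wᵀ = W := hW.isHermitian
  have hWdet : IsUnit W.det := (isUnit_iff_isUnit_det W).mp hW.isUnit
  have hMdet : IsUnit (Sᵀ * W⁻¹ * S).det :=
    (isUnit_iff_isUnit_det _).mp (hW.inv.conjTranspose_mul_mul_same hS).isUnit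
  have horth : (G - minT W S) * W * (minT W S)ᵀ = 0 := by
    rw [Matrix.sub_mul, Matrix.sub_mul, mul_mul_transpose_minT hWdet hWsymm hG,
      mul_mul_transpose_minT hWdet hWsymm (minT_mul_self hMdet), sub_self]
  have hdiff :=
    calc S * G * W * Gᵀ * Sᵀ - S * minT W S * W * (minT W S)ᵀ * Sᵀ
        = S * (G * W * Gᵀ - minT W S * W * (minT W S)ᵀ) * Sᵀ := by
          rw [Matrix.mul_sub, Matrix.sub_mul]; simp only [Matrix.mul_assoc]
      _ = S * ((G - minT W S) * W * (G - minT W S)ᵀ) * Sᵀ := by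
          rw [mul_mul_transpose_sub_mul_mul_transpose hWsymm horth]
      _ = S * (G - minT W S) * W * (S * (G - minT W S))ᵀ := by
          simp only [transpose_mul, Matrix.mul_assoc]
  rw [hdiff]
  exact hW.posSemidef.mul_mul_conjTranspose_same (S * (G - minT W S))
end
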